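/- arXiv:0903.2024 — 3 statements merged into one kernel-verified Lean document; each statement's English description precedes it below -/
import Mathlib

section
/- Let N : [1,∞) → ℝ be a continuous function such that |N(u)| ≤ C·u^k for all u ≥ 1, for some constant C > 0 and some nonnegative integer k. Then for every complex number s with Re(s) > k, the function F(q,s) := Σ_{r=1}^∞ N(q^r)·q^{−rs}·log q (which converges for every real q > 1) satisfies lim_{q→1⁺} F(q,s) = ∫₁^∞ N(u)·u^{−s}·du/u. -/
open MeasureTheory Filter Set

noncomputable def gfun (N : ℝ → ℝ) (s : ℂ) (t : ℝ) : ℂ :=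
  (N (Real.exp t) : ℂ) * Complex.exp (-s * t)

noncomputable def Hstep (N : ℝ → ℝ) (s : ℂ) (h : ℝ) (t : ℝ) : ℂ :=
  gfun N s (h * (⌈t / h⌉₊ : ℝ))

lemma gbound (N : ℝ → ℝ) (C : ℝ) (k : ℕ)
    (hbound : ∀ u : ℝ, 1 ≤ u → |N u| ≤ C * u ^ k) (s : ℂ)
    {t : ℝ} (ht : 0 ≤ t) :
    ‖gfun N s t‖ ≤ C * Real.exp (-(s.re - k) * t) := by
  have h1 : (1:ℝ) ≤ Real.exp t := Real.one_le_exp ht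
  have hNb := hbound _ h1
  have : ‖gfun N s t‖ = |N (Real.exp t)| * Real.exp (-s.re * t) := by
    rw [gfun, norm_mul, Complex.norm_exp,
      Complex.norm_real, Real.norm_eq_abs]
    congr 2
    simp [mul_comm]
  rw [this]
  have hk : (Real.exp t) ^ k = Real.exp (k * t) := by
    rw [Real.exp_nat_mul]
  calc |N (Real.exp t)| * Real.exp (-s.re * t)
      ≤ (C * Real.exp t ^ k) * Real.exp (-s.re * t) := by
        apply mul_le_mul_of_nonneg_right hNb (Real.exp_nonneg _)
    _ = C * Real.exp (-(s.re - k) * t) := by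
        rw [hk, mul_assoc, ← Real.exp_add]
        ring_nf

lemma gcontOn (N : ℝ → ℝ) (hN : ContinuousOn N (Set.Ici 1)) (s : ℂ) :
    ContinuousOn (gfun N s) (Set.Ici 0) := by
  have h1 : ContinuousOn (fun t : ℝ => ((N (Real.exp t)) : ℂ)) (Set.Ici 0) :=
    Complex.continuous_ofReal.comp_continuousOn
      (hN.comp Real.continuous_exp.continuousOn (fun t ht => Real.one_le_exp ht))
  have h2 : Continuous fun t : ℝ => Complex.exp (-s * t) := by fun_prop
  unfold gfun
  exact h1.mul h2.continuousOn

lemma Hmeas (N : ℝ → ℝ) (s : ℂ) (h : ℝ) : Measurable (Hstep N s h) := by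
  have h1 : Measurable fun t : ℝ => (⌈t / h⌉₊ : ℕ) :=
    Nat.measurable_ceil.comp (measurable_id.div_const h)
  have h2 : Measurable fun n : ℕ => gfun N s (h * n) := measurable_from_nat
  exact h2.comp h1

lemma ceil_on_Ioc {h : ℝ} (hh : 0 < h) (r : ℕ) {t : ℝ}
    (ht : t ∈ Set.Ioc ((r : ℝ) * h) (((r : ℝ) + 1) * h)) :
    ⌈t / h⌉₊ = r + 1 := by
  rw [Nat.ceil_eq_iff (Nat.succ_ne_zero r)]
  constructor
  · push_cast
    rw [lt_div_iff₀ hh]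
    exact ht.1
  · push_cast
    rw [div_le_iff₀ hh]
    exact ht.2

lemma Hbound (N : ℝ → ℝ) (C : ℝ) (hC : 0 < C) (k : ℕ)
    (hbound : ∀ u : ℝ, 1 ≤ u → |N u| ≤ C * u ^ k) (s : ℂ) (hs : (k : ℝ) < s.re)
    {h : ℝ} (hh : 0 < h) {t : ℝ} (ht : 0 < t) :
    ‖Hstep N s h t‖ ≤ C * Real.exp (-(s.re - k) * t) := by
  have ha : 0 < s.re - k := sub_pos.2 hs
  have hle : t ≤ h * (⌈t / h⌉₊ : ℝ) := by
    rw [mul_comm, ← div_le_iff₀ hh]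
    exact Nat.le_ceil _
  have h0 : (0:ℝ) ≤ h * (⌈t / h⌉₊ : ℝ) := le_trans ht.le hle
  calc ‖Hstep N s h t‖ ≤ C * Real.exp (-(s.re - k) * (h * (⌈t / h⌉₊ : ℝ))) :=
        gbound N C k hbound s h0
    _ ≤ C * Real.exp (-(s.re - k) * t) := by
        apply mul_le_mul_of_nonneg_left _ hC.le
        apply Real.exp_le_exp.2
        nlinarith

lemma Hint (N : ℝ → ℝ) (C : ℝ) (hC : 0 < C) (k : ℕ)
    (hbound : ∀ u : ℝ, 1 ≤ u → |N u| ≤ C * u ^ k) (s : ℂ) (hs : (k : ℝ) < s.re)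
    {h : ℝ} (hh : 0 < h) :
    IntegrableOn (Hstep N s h) (Set.Ioi 0) := by
  have ha : 0 < s.re - k := sub_pos.2 hs
  have hbd : Integrable (fun t => C * Real.exp (-(s.re - k) * t))
      (volume.restrict (Set.Ioi (0:ℝ))) := by
    have := (exp_neg_integrableOn_Ioi 0 ha).const_mul C
    simpa [neg_mul] using this
  apply Integrable.mono' hbd ((Hmeas N s h).aestronglyMeasurable)
  rw [ae_restrict_iff' measurableSet_Ioi]
  exact Filter.Eventually.of_forall fun t ht => Hbound N C hC k hbound s hs hh ht

lemma hasSum_key (N : ℝ → ℝ) (C : ℝ) (hC : 0 < C) (k : ℕ)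
    (hbound : ∀ u : ℝ, 1 ≤ u → |N u| ≤ C * u ^ k) (s : ℂ) (hs : (k : ℝ) < s.re)
    {q : ℝ} (hq : 1 < q) :
    HasSum (fun r : ℕ =>
        (N (q ^ (r + 1)) : ℂ) * (q : ℂ) ^ (-((r : ℂ) + 1) * s) * (Real.log q : ℂ))
      (∫ t in Set.Ioi (0:ℝ), Hstep N s (Real.log q) t) := by
  set h := Real.log q with hhdef
  have hh : 0 < h := Real.log_pos hq
  have hq0 : 0 < q := lt_trans one_pos hq
  set S : ℕ → Set ℝ := fun r => Set.Ioc ((r:ℝ) * h) (((r:ℝ) + 1) * h) with hS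
  have hdisj : Pairwise (Function.onFun Disjoint S) := by
    intro i j hij
    rw [Function.onFun, hS]
    simp only
    rw [Set.Ioc_disjoint_Ioc]
    rcases hij.lt_or_gt with hlt | hlt
    · refine le_trans (min_le_left _ _) (le_trans ?_ (le_max_right _ _))
      have : (i:ℝ) + 1 ≤ (j:ℝ) := by exact_mod_cast hlt
      nlinarith
    · refine le_trans (min_le_right _ _) (le_trans ?_ (le_max_left _ _))
      have : (j:ℝ) + 1 ≤ (i:ℝ) := by exact_mod_cast hlt
      nlinarith
  have hunion : (⋃ r, S r) = Set.Ioi 0 := by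
    ext t
    simp only [hS, Set.mem_iUnion, Set.mem_Ioc, Set.mem_Ioi]
    constructor
    · rintro ⟨r, h1, h2⟩
      have : (0:ℝ) ≤ (r:ℝ) * h := by positivity
      linarith
    · intro ht
      have hpos : 0 < t / h := div_pos ht hh
      have h1 : 1 ≤ ⌈t / h⌉₊ := Nat.one_le_ceil_iff.2 hpos
      have hc : ((⌈t / h⌉₊ - 1 : ℕ) : ℝ) = (⌈t / h⌉₊ : ℝ) - 1 := by
        rw [Nat.cast_sub h1, Nat.cast_one]
      refine ⟨⌈t / h⌉₊ - 1, ?_, ?_⟩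
      · rw [hc]
        have hcl : (⌈t / h⌉₊ : ℝ) < t / h + 1 := Nat.ceil_lt_add_one hpos.le
        rw [← lt_div_iff₀ hh]
        linarith
      · rw [hc]
        have : ((⌈t / h⌉₊ : ℝ) - 1) + 1 = (⌈t / h⌉₊ : ℝ) := by ring
        rw [this, ← div_le_iff₀ hh]
        exact Nat.le_ceil _
  have hint : IntegrableOn (Hstep N s h) (Set.Ioi 0) := Hint N C hC k hbound s hs hh
  have hHS := hasSum_integral_iUnion (μ := volume) (f := Hstep N s h)
      (fun r => measurableSet_Ioc) hdisj (by rw [hunion]; exact hint)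
  rw [hunion] at hHS
  have hIr : ∀ r : ℕ, (∫ t in S r, Hstep N s h t) = gfun N s (h * ((r:ℝ) + 1)) * (h:ℂ) := by
    intro r
    have hcon : Set.EqOn (Hstep N s h) (fun _ => gfun N s (h * ((r:ℝ) + 1))) (S r) := by
      intro t ht
      rw [Hstep, ceil_on_Ioc hh r ht]
      push_cast
      ring_nf
    rw [setIntegral_congr_fun measurableSet_Ioc hcon, setIntegral_const, measureReal_def, Real.volume_Ioc]
    rw [ENNReal.toReal_ofReal (by nlinarith : (0:ℝ) ≤ ((r:ℝ) + 1) * h - (r:ℝ) * h)]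
    have he : ((r:ℝ) + 1) * h - (r:ℝ) * h = h := by ring
    rw [he, Complex.real_smul, mul_comm]
  have hterm : ∀ r : ℕ,
      (N (q ^ (r + 1)) : ℂ) * (q : ℂ) ^ (-((r : ℂ) + 1) * s) * (Real.log q : ℂ)
        = gfun N s (h * ((r:ℝ) + 1)) * (h:ℂ) := by
    intro r
    have hqe : q ^ (r + 1) = Real.exp (h * ((r:ℝ) + 1)) := by
      conv_lhs => rw [← Real.exp_log hq0]
      rw [← Real.exp_nat_mul]
      congr 1
      push_cast
      ring
    have hcp : (q:ℂ) ^ (-((r:ℂ) + 1) * s) = Complex.exp (-s * ((h * ((r:ℝ) + 1) : ℝ) : ℂ)) := by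
      rw [Complex.cpow_def_of_ne_zero (Complex.ofReal_ne_zero.2 hq0.ne'),
        ← Complex.ofReal_log hq0.le]
      congr 1
      push_cast
      ring
    rw [hqe, hcp, gfun]
  have hfe : (fun r : ℕ =>
      (N (q ^ (r + 1)) : ℂ) * (q : ℂ) ^ (-((r : ℂ) + 1) * s) * (Real.log q : ℂ))
        = fun r => ∫ t in S r, Hstep N s h t :=
    funext fun r => (hterm r).trans (hIr r).symm
  rw [hfe]
  exact hHS

lemma Hlim (N : ℝ → ℝ) (hN : ContinuousOn N (Set.Ici 1)) (s : ℂ) {t : ℝ} (ht : 0 < t) :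
    Filter.Tendsto (fun h : ℝ => Hstep N s h t)
      (nhdsWithin 0 (Set.Ioi 0)) (nhds (gfun N s t)) := by
  have hcont : ContinuousAt (gfun N s) t :=
    (gcontOn N hN s).continuousAt
      (Filter.mem_of_superset (Ioi_mem_nhds ht) Set.Ioi_subset_Ici_self)
  have hupper : Filter.Tendsto (fun h : ℝ => t + h) (nhdsWithin 0 (Set.Ioi 0)) (nhds t) := by
    have : Filter.Tendsto (fun h : ℝ => t + h) (nhds 0) (nhds (t + 0)) :=
      tendsto_const_nhds.add tendsto_id
    simpa using this.mono_left nhdsWithin_le_nhds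
  have hsq : Filter.Tendsto (fun h : ℝ => h * (⌈t / h⌉₊ : ℝ))
      (nhdsWithin 0 (Set.Ioi 0)) (nhds t) := by
    apply tendsto_of_tendsto_of_tendsto_of_le_of_le' tendsto_const_nhds hupper
    · refine Filter.eventually_of_mem self_mem_nhdsWithin fun h hh => ?_
      rw [Set.mem_Ioi] at hh
      rw [mul_comm, ← div_le_iff₀ hh]
      exact Nat.le_ceil _
    · refine Filter.eventually_of_mem self_mem_nhdsWithin fun h hh => ?_
      rw [Set.mem_Ioi] at hh
      have hpos : 0 ≤ t / h := (div_pos ht hh).le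
      have hcl : (⌈t / h⌉₊ : ℝ) < t / h + 1 := Nat.ceil_lt_add_one hpos
      have := mul_lt_mul_of_pos_left hcl hh
      calc h * (⌈t / h⌉₊ : ℝ) ≤ h * (t / h + 1) := by nlinarith
        _ = t + h := by field_simp
  exact hcont.tendsto.comp hsq

lemma cov (N : ℝ → ℝ) (s : ℂ) :
    (∫ u in Set.Ioi (1:ℝ), (N u : ℂ) * (u : ℂ) ^ (-s) / (u : ℂ))
      = ∫ t in Set.Ioi (0:ℝ), gfun N s t := by
  have himg : Real.exp '' Set.Ioi 0 = Set.Ioi 1 := by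
    ext u
    simp only [Set.mem_image, Set.mem_Ioi]
    constructor
    · rintro ⟨t, ht, rfl⟩
      calc (1:ℝ) = Real.exp 0 := Real.exp_zero.symm
        _ < Real.exp t := Real.exp_lt_exp.2 ht
    · intro hu
      exact ⟨Real.log u, Real.log_pos hu, Real.exp_log (lt_trans one_pos hu)⟩
  have hderiv : ∀ x ∈ Set.Ioi (0:ℝ), HasDerivWithinAt Real.exp (Real.exp x) (Set.Ioi 0) x :=
    fun x _ => (Real.hasDerivAt_exp x).hasDerivWithinAt
  have hinj : Set.InjOn Real.exp (Set.Ioi 0) := Real.exp_injective.injOn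
  have h := integral_image_eq_integral_abs_deriv_smul measurableSet_Ioi hderiv hinj
      (fun u => (N u : ℂ) * (u : ℂ) ^ (-s) / (u : ℂ))
  rw [himg] at h
  rw [h]
  apply setIntegral_congr_fun measurableSet_Ioi
  intro t _
  have he : (0:ℝ) < Real.exp t := Real.exp_pos t
  have hcp : ((Real.exp t : ℝ) : ℂ) ^ (-s) = Complex.exp (-s * (t : ℂ)) := by
    rw [Complex.ofReal_exp,
      Complex.cpow_def_of_ne_zero (Complex.exp_ne_zero _),
      Complex.log_exp (by simpa using Real.pi_pos) (by simpa using Real.pi_pos.le)]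
    ring_nf
  show (|Real.exp t|) • ((N (Real.exp t) : ℂ) * ((Real.exp t : ℝ) : ℂ) ^ (-s)
      / ((Real.exp t : ℝ) : ℂ)) = gfun N s t
  rw [abs_of_pos he, gfun, hcp, Complex.real_smul]
  have hne : ((Real.exp t : ℝ) : ℂ) ≠ 0 := Complex.ofReal_ne_zero.2 he.ne'
  field_simp

/-- For a continuous function `N : [1,∞) → ℝ` with a polynomial
growth bound `|N(u)| ≤ C·u^k`, and a complex number `s` with `Re(s) > k`, the series
`F(q,s) = Σ_{r≥1} N(q^r)·q^{-rs}·log q` converges for every real `q > 1` and tends,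
as `q → 1⁺`, to `∫₁^∞ N(u)·u^{-s} du/u`. -/
theorem statement0 (N : ℝ → ℝ) (hN : ContinuousOn N (Set.Ici 1))
    (C : ℝ) (hC : 0 < C) (k : ℕ) (hbound : ∀ u : ℝ, 1 ≤ u → |N u| ≤ C * u ^ k)
    (s : ℂ) (hs : (k : ℝ) < s.re) :
    (∀ q : ℝ, 1 < q →
      Summable (fun r : ℕ =>
        (N (q ^ (r + 1)) : ℂ) * (q : ℂ) ^ (-((r : ℂ) + 1) * s) * (Real.log q : ℂ))) ∧
    Filter.Tendsto
      (fun q : ℝ => ∑' r : ℕ,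
        (N (q ^ (r + 1)) : ℂ) * (q : ℂ) ^ (-((r : ℂ) + 1) * s) * (Real.log q : ℂ))
      (nhdsWithin 1 (Set.Ioi 1))
      (nhds (∫ u in Set.Ioi (1 : ℝ), (N u : ℂ) * (u : ℂ) ^ (-s) / (u : ℂ))) := by
  have ha : 0 < s.re - k := sub_pos.2 hs
  refine ⟨fun q hq => (hasSum_key N C hC k hbound s hs hq).summable, ?_⟩
  rw [cov N s]
  have hcongr : ∀ᶠ q in nhdsWithin 1 (Set.Ioi 1),
      (∫ t in Set.Ioi (0:ℝ), Hstep N s (Real.log q) t)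
        = ∑' r : ℕ,
            (N (q ^ (r + 1)) : ℂ) * (q : ℂ) ^ (-((r : ℂ) + 1) * s) * (Real.log q : ℂ) :=
    Filter.eventually_of_mem self_mem_nhdsWithin fun q hq =>
      ((hasSum_key N C hC k hbound s hs hq).tsum_eq).symm
  refine Filter.Tendsto.congr' hcongr ?_
  apply tendsto_integral_filter_of_dominated_convergence
    (bound := fun t => C * Real.exp (-(s.re - k) * t))
  · exact Filter.Eventually.of_forall fun q => (Hmeas N s _).aestronglyMeasurable
  · refine Filter.eventually_of_mem self_mem_nhdsWithin fun q hq => ?_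
    rw [ae_restrict_iff' measurableSet_Ioi]
    exact Filter.Eventually.of_forall fun t ht =>
      Hbound N C hC k hbound s hs (Real.log_pos hq) ht
  · have := (exp_neg_integrableOn_Ioi 0 ha).const_mul C
    simpa [neg_mul] using this
  · rw [ae_restrict_iff' measurableSet_Ioi]
    refine Filter.Eventually.of_forall fun t ht => ?_
    have hlog : Filter.Tendsto Real.log (nhdsWithin 1 (Set.Ioi 1))
        (nhdsWithin 0 (Set.Ioi 0)) := by
      apply tendsto_nhdsWithin_of_tendsto_nhds_of_eventually_within
      · have : Filter.Tendsto Real.log (nhds 1) (nhds 0) := by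
          simpa using (Real.continuousAt_log one_ne_zero).tendsto
        exact this.mono_left nhdsWithin_le_nhds
      · exact Filter.eventually_of_mem self_mem_nhdsWithin fun q hq => Real.log_pos hq
    exact (Hlim N hN s ht).comp hlog
end

section
/- For every complex number s with Re(s) > 1, one has 1/s − (s+1)·∫₁^∞ (arctanh(1/u) − ζ′(−1)/ζ(−1))·u^{−s−2} du = −(d/ds)Γ(s/2)/Γ(s/2) + ζ′(−1)/ζ(−1) − log 2 − γ/2, where (d/ds)Γ(s/2) denotes the derivative at s of the function s ↦ Γ(s/2). -/
open MeasureTheory Set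

/-- The inverse hyperbolic tangent, `arctanh x = (1/2)·log((1+x)/(1−x))`. -/
noncomputable def arctanh (x : ℝ) : ℝ := Real.log ((1 + x) / (1 - x)) / 2

open Set Filter Topology Finset MeasureTheory


noncomputable def psiR (x : ℝ) : ℝ := deriv (Real.log ∘ Real.Gamma) x

lemma diff_logGamma {x : ℝ} (hx : 0 < x) :
    DifferentiableAt ℝ (Real.log ∘ Real.Gamma) x := by
  refine ((Real.differentiableAt_Gamma ?_).log (Real.Gamma_ne_zero ?_)) <;>
    exact fun m ↦ ne_of_gt (lt_of_le_of_lt (by simpa using neg_nonpos.mpr (Nat.cast_nonneg m)) hx)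

lemma psiR_rec {x : ℝ} (hx : 0 < x) : psiR (x + 1) = psiR x + 1 / x := by
  unfold psiR
  have h_rec : ∀ y : ℝ, 0 < y → (Real.log ∘ Real.Gamma) (y + 1)
      = (Real.log ∘ Real.Gamma) y + Real.log y := by
    intro y hy
    simp only [Function.comp_apply, Real.Gamma_add_one hy.ne',
      Real.log_mul hy.ne' (Real.Gamma_pos_of_pos hy).ne', add_comm]
  rw [← deriv_comp_add_const, one_div, ← Real.deriv_log,
    ← deriv_add (diff_logGamma hx) (Real.differentiableAt_log hx.ne')]
  apply Filter.EventuallyEq.deriv_eq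
  filter_upwards [eventually_gt_nhds hx] using h_rec

lemma psiR_add_nat {x : ℝ} (hx : 0 < x) (n : ℕ) :
    psiR (x + n) = psiR x + ∑ j ∈ Finset.range n, (x + j)⁻¹ := by
  induction n with
  | zero => simp
  | succ n ih =>
    have : x + (n + 1 : ℕ) = (x + n) + 1 := by push_cast; ring
    rw [this, psiR_rec (by positivity), ih, Finset.sum_range_succ, one_div]
    ring

lemma log_le_psiR_le {y : ℝ} (hy : 1 < y) :
    Real.log (y - 1) ≤ psiR y ∧ psiR y ≤ Real.log y := by
  have hy0 : 0 < y := by linarith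
  have hmem : ∀ {z : ℝ}, 0 < z → z ∈ Ioi (0:ℝ) := fun h => h
  have hfc := Real.convexOn_log_Gamma
  have hval : ∀ z : ℝ, 0 < z → (Real.log ∘ Real.Gamma) (z + 1)
      = (Real.log ∘ Real.Gamma) z + Real.log z := by
    intro z hz
    simp only [Function.comp_apply, Real.Gamma_add_one hz.ne',
      Real.log_mul hz.ne' (Real.Gamma_pos_of_pos hz).ne', add_comm]
  constructor
  · have h := hfc.slope_le_deriv (hmem (by linarith : (0:ℝ) < y - 1)) (hmem hy0)
      (by linarith) (diff_logGamma hy0)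
    rw [slope_def_field] at h
    have h2 := hval (y - 1) (by linarith)
    rw [sub_add_cancel] at h2
    calc Real.log (y - 1)
        = ((Real.log ∘ Real.Gamma) y - (Real.log ∘ Real.Gamma) (y-1)) / (y - (y-1)) := by
          rw [h2]; field_simp; ring
      _ ≤ psiR y := h
  · have h := hfc.deriv_le_slope (hmem hy0) (hmem (by linarith : (0:ℝ) < y + 1))
      (by linarith) (diff_logGamma hy0)
    rw [slope_def_field] at h
    calc psiR y ≤ ((Real.log ∘ Real.Gamma) (y+1) - (Real.log ∘ Real.Gamma) y) / (y + 1 - y) :=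
        h
      _ = Real.log y := by rw [hval y hy0]; field_simp; ring

lemma log_ratio_tendsto (c : ℝ) :
    Tendsto (fun n : ℕ => Real.log (n + c) - Real.log n) atTop (𝓝 0) := by
  have heq : (fun n : ℕ => Real.log (n + c) - Real.log n)
      =ᶠ[atTop] fun n : ℕ => Real.log (1 + c / n) := by
    filter_upwards [(tendsto_natCast_atTop_atTop (R := ℝ)).eventually_ge_atTop (1 - c),
      eventually_ge_atTop 1] with n hn hn1
    have hn0 : (0:ℝ) < n := by exact_mod_cast hn1
    have hnc : (0:ℝ) < n + c := by linarith
    rw [← Real.log_div hnc.ne' hn0.ne']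
    congr 1
    field_simp
  apply Tendsto.congr' heq.symm
  have : Tendsto (fun n : ℕ => 1 + c / n) atTop (𝓝 (1 + 0)) :=
    (tendsto_const_nhds.div_atTop (tendsto_natCast_atTop_atTop (R := ℝ))).const_add 1
  have := this.log (by norm_num)
  simpa using this

lemma tendsto_digamma {x : ℝ} (hx : 0 < x) :
    Tendsto (fun n : ℕ => Real.log n - ∑ j ∈ Finset.range n, (x + j)⁻¹)
      atTop (𝓝 (psiR x)) := by
  have key : ∀ n : ℕ, Real.log n - ∑ j ∈ Finset.range n, (x + j)⁻¹
      = psiR x + (Real.log n - psiR (x + n)) := by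
    intro n; rw [psiR_add_nat hx n]; ring
  simp only [key]
  have h0 : Tendsto (fun n : ℕ => Real.log n - psiR (x + n)) atTop (𝓝 0) := by
    have hup : Tendsto (fun n : ℕ => Real.log n - Real.log (n + (x - 1))) atTop (𝓝 0) := by
      simpa using (log_ratio_tendsto (x - 1)).neg
    have hlo : Tendsto (fun n : ℕ => Real.log n - Real.log (n + x)) atTop (𝓝 0) := by
      simpa using (log_ratio_tendsto x).neg
    apply tendsto_of_tendsto_of_tendsto_of_le_of_le' hlo hup
    · filter_upwards [eventually_ge_atTop 1] with n hn
      have h1 : 1 < x + n := by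
        have : (1:ℝ) ≤ n := by exact_mod_cast hn
        linarith
      have := (log_le_psiR_le h1).2
      have : Real.log (x + n) = Real.log (n + x) := by ring_nf
      have h2 := (log_le_psiR_le h1).2
      rw [add_comm x (n:ℝ)] at h2
      linarith
    · filter_upwards [eventually_ge_atTop 1] with n hn
      have h1 : 1 < x + n := by
        have : (1:ℝ) ≤ n := by exact_mod_cast hn
        linarith
      have h2 := (log_le_psiR_le h1).1
      have heq : x + (n:ℝ) - 1 = (n:ℝ) + (x - 1) := by ring
      rw [heq] at h2
      linarith
  simpa using tendsto_const_nhds.add h0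

lemma summable_shift_sq : Summable (fun k : ℕ => (((k:ℝ)+1)^2)⁻¹) := by
  have h : Summable (fun n : ℕ => ((n:ℝ)^2)⁻¹) := by
    exact Real.summable_nat_pow_inv.mpr one_lt_two
  have := (summable_nat_add_iff (f := fun n : ℕ => ((n:ℝ)^2)⁻¹) 1).mpr h
  apply this.congr
  intro n
  push_cast
  ring

lemma summable_T {x : ℝ} (hx : 0 < x) :
    Summable (fun k : ℕ => 1/(2*(k:ℝ)+1) - (x + 2*(k:ℝ)+2)⁻¹) := by
  refine Summable.of_nonneg_of_le (fun k => ?_) (fun k => ?_)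
    (summable_shift_sq.mul_left (x+1))
  · have h1 : (0:ℝ) < 2*(k:ℝ)+1 := by positivity
    have h2 : (0:ℝ) < x + 2*(k:ℝ)+2 := by positivity
    rw [sub_nonneg, one_div]
    exact inv_anti₀ h1 (by linarith)
  · have h1 : (0:ℝ) < 2*(k:ℝ)+1 := by positivity
    have h2 : (0:ℝ) < x + 2*(k:ℝ)+2 := by positivity
    have h3 : (0:ℝ) < ((k:ℝ)+1)^2 := by positivity
    have key : 1/(2*(k:ℝ)+1) - (x + 2*(k:ℝ)+2)⁻¹
        = (x+1) * ((2*(k:ℝ)+1) * (x + 2*(k:ℝ)+2))⁻¹ := by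
      field_simp
      ring
    rw [key]
    apply mul_le_mul_of_nonneg_left _ (by linarith)
    apply inv_anti₀ h3
    nlinarith [sq_nonneg ((k:ℝ)+1)]

lemma partial_sum_identity {x : ℝ} (hx : 0 < x) (n : ℕ) :
    ∑ k ∈ Finset.range n, (1/(2*(k:ℝ)+1) - (x + 2*(k:ℝ)+2)⁻¹)
      = (harmonic (2*n) : ℝ) - (harmonic n : ℝ)/2
        - (∑ k ∈ Finset.range n, ((x/2 + 1) + (k:ℝ))⁻¹)/2 := by
  induction n with
  | zero => simp
  | succ n ih =>
    rw [Finset.sum_range_succ, ih, Finset.sum_range_succ, harmonic_succ,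
      show 2*(n+1) = (2*n + 1) + 1 by ring, harmonic_succ, harmonic_succ]
    push_cast
    have h1 : (0:ℝ) < 2*(n:ℝ)+1 := by positivity
    have h2 : (0:ℝ) < x + 2*(n:ℝ)+2 := by positivity
    have h3 : (0:ℝ) < x/2 + 1 + (n:ℝ) := by positivity
    field_simp
    ring

lemma hasSum_T {x : ℝ} (hx : 0 < x) :
    HasSum (fun k : ℕ => 1/(2*(k:ℝ)+1) - (x + 2*(k:ℝ)+2)⁻¹)
      (1/x + psiR (x/2)/2 + Real.log 2 + Real.eulerMascheroniConstant/2) := by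
  rw [(summable_T hx).hasSum_iff_tendsto_nat]
  have h2n : Tendsto (fun n : ℕ => (harmonic (2*n) : ℝ) - Real.log ((2*n : ℕ) : ℝ))
      atTop (𝓝 Real.eulerMascheroniConstant) := by
    exact Real.tendsto_harmonic_sub_log.comp
      (tendsto_atTop_atTop.mpr fun b => ⟨b, fun a ha => by omega⟩)
  have hn : Tendsto (fun n : ℕ => (harmonic n : ℝ) - Real.log n)
      atTop (𝓝 Real.eulerMascheroniConstant) := Real.tendsto_harmonic_sub_log
  have hd := tendsto_digamma (x := x/2 + 1) (by positivity)
  have key : Tendsto (fun n : ℕ =>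
      ((harmonic (2*n) : ℝ) - Real.log ((2*n : ℕ) : ℝ)) - ((harmonic n : ℝ) - Real.log n)/2
        + Real.log 2
        + (Real.log n - ∑ k ∈ Finset.range n, ((x/2 + 1) + (k:ℝ))⁻¹)/2)
      atTop (𝓝 (Real.eulerMascheroniConstant - Real.eulerMascheroniConstant/2
        + Real.log 2 + psiR (x/2 + 1)/2)) := by
    exact ((h2n.sub (hn.div_const 2)).add_const (Real.log 2)).add (hd.div_const 2)
  have heq : (fun n : ℕ => ∑ k ∈ Finset.range n, (1/(2*(k:ℝ)+1) - (x + 2*(k:ℝ)+2)⁻¹))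
      =ᶠ[atTop] fun n : ℕ => ((harmonic (2*n) : ℝ) - Real.log ((2*n : ℕ) : ℝ)) - ((harmonic n : ℝ) - Real.log n)/2
        + Real.log 2
        + (Real.log n - ∑ k ∈ Finset.range n, ((x/2 + 1) + (k:ℝ))⁻¹)/2 := by
    filter_upwards [eventually_ge_atTop 1] with n hn1
    have hn0 : (0:ℝ) < n := by exact_mod_cast hn1
    rw [partial_sum_identity hx n]
    have hlog : Real.log (2*n : ℕ) = Real.log 2 + Real.log n := by
      push_cast
      rw [Real.log_mul two_ne_zero hn0.ne']
    rw [hlog]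
    ring
  have := key.congr' heq.symm
  convert this using 2
  have hrec : psiR (x/2 + 1) = psiR (x/2) + 1/(x/2) := psiR_rec (by positivity)
  rw [hrec]
  field_simp
  ring

noncomputable def hC (s : ℂ) : ℂ := ∑' k : ℕ, ((2*(k:ℂ)+1) * (s + 2*k + 2))⁻¹

lemma twok1_ne (k : ℕ) : (2*(k:ℂ)+1) ≠ 0 := by
  have : ((2*(k:ℝ)+1 : ℝ) : ℂ) ≠ 0 := Complex.ofReal_ne_zero.mpr (by positivity)
  convert this using 1
  push_cast
  ring

lemma re_denom {s : ℂ} (k : ℕ) : (s + 2*(k:ℂ) + 2).re = s.re + 2*k + 2 := by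
  simp [Complex.add_re, Complex.mul_re]

lemma denom_ne {s : ℂ} (hs : 1 < s.re) (k : ℕ) : s + 2*(k:ℂ) + 2 ≠ 0 := by
  intro h
  have := congrArg Complex.re h
  rw [re_denom, Complex.zero_re] at this
  have hk : (0:ℝ) ≤ (k:ℝ) := Nat.cast_nonneg k
  linarith

lemma norm_denom_ge {s : ℂ} (hs : 1 < s.re) (k : ℕ) :
    2*(k:ℝ)+3 ≤ ‖s + 2*(k:ℂ) + 2‖ := by
  calc 2*(k:ℝ)+3 ≤ (s + 2*(k:ℂ) + 2).re := by rw [re_denom]; linarith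
    _ ≤ |(s + 2*(k:ℂ) + 2).re| := le_abs_self _
    _ ≤ ‖s + 2*(k:ℂ) + 2‖ := Complex.abs_re_le_norm _

lemma summable_bound : Summable (fun k : ℕ => ((2*(k:ℝ)+1) * (2*(k:ℝ)+3))⁻¹) := by
  refine Summable.of_nonneg_of_le (fun k => by positivity) (fun k => ?_) summable_shift_sq
  apply inv_anti₀ (by positivity)
  nlinarith [sq_nonneg ((k:ℝ)+1)]

lemma hC_tendsto : TendstoUniformlyOn
    (fun (t : Finset ℕ) (z : ℂ) => ∑ k ∈ t, ((2*(k:ℂ)+1) * (z + 2*k + 2))⁻¹)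
    hC Filter.atTop {z : ℂ | 1 < z.re} := by
  apply tendstoUniformlyOn_tsum summable_bound
  intro k z hz
  rw [mul_inv, norm_mul, norm_inv, norm_inv, mul_inv]
  apply mul_le_mul
  · rw [show (2*(k:ℂ)+1) = ((2*(k:ℝ)+1 : ℝ) : ℂ) by push_cast; ring, Complex.norm_real,
      Real.norm_of_nonneg (by positivity)]
  · exact inv_anti₀ (by positivity) (norm_denom_ge hz k)
  · positivity
  · positivity

lemma hC_diffOn : DifferentiableOn ℂ hC {z : ℂ | 1 < z.re} := by
  apply hC_tendsto.tendstoLocallyUniformlyOn.differentiableOn _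
    (isOpen_lt continuous_const Complex.continuous_re)
  filter_upwards with t
  apply DifferentiableOn.fun_sum
  intro k _
  apply DifferentiableOn.inv
  · fun_prop
  · intro z hz
    exact mul_ne_zero (twok1_ne k) (denom_ne hz k)

noncomputable def Phi (z : ℂ) : ℂ :=
  1/z - (z+1) * hC z + deriv (fun w : ℂ => Complex.Gamma (w/2)) z / Complex.Gamma (z/2)

lemma gammaHalf_ne {z : ℂ} (hz : 0 < z.re) : Complex.Gamma (z/2) ≠ 0 :=
  Complex.Gamma_ne_zero_of_re_pos (by rw [Complex.div_re]; simp [Complex.normSq]; positivity)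

lemma gammaHalf_diffOn : DifferentiableOn ℂ (fun w : ℂ => Complex.Gamma (w/2))
    {z : ℂ | 0 < z.re} := by
  intro z hz
  apply DifferentiableAt.differentiableWithinAt
  have h1 : DifferentiableAt ℂ Complex.Gamma (z/2) := by
    apply Complex.differentiableAt_Gamma
    intro m h
    have := congrArg Complex.re h
    rw [Complex.div_re] at this
    simp [Complex.normSq] at this
    have hm : (0:ℝ) ≤ (m:ℝ) := Nat.cast_nonneg m
    have hz' : 0 < z.re := hz
    nlinarith [this]
  exact h1.comp z ((differentiableAt_id.div_const 2))

lemma Phi_analytic : AnalyticOnNhd ℂ Phi {z : ℂ | 1 < z.re} := by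
  apply DifferentiableOn.analyticOnNhd _ (isOpen_lt continuous_const Complex.continuous_re)
  have hopen0 : IsOpen {z : ℂ | 0 < z.re} := isOpen_lt continuous_const Complex.continuous_re
  have hderiv : AnalyticOnNhd ℂ (deriv (fun w : ℂ => Complex.Gamma (w/2))) {z : ℂ | 0 < z.re} :=
    (gammaHalf_diffOn.analyticOnNhd hopen0).deriv
  apply DifferentiableOn.add
  · apply DifferentiableOn.sub
    · apply DifferentiableOn.div (differentiableOn_const 1) differentiableOn_id
      intro z hz
      intro h
      rw [h] at hz
      simp at hz
      linarith [hz]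
    · exact ((differentiableOn_id.add_const 1)).mul hC_diffOn
  · apply DifferentiableOn.div
    · exact (hderiv.differentiableOn).mono (fun z hz => by simp at hz ⊢; linarith [hz])
    · exact (gammaHalf_diffOn).mono (fun z hz => by simp at hz ⊢; linarith [hz])
    · intro z hz
      exact gammaHalf_ne (by simp at hz; linarith [hz])

lemma deriv_complex_gamma_real {x : ℝ} (hx : 0 < x) :
    deriv Complex.Gamma (x:ℂ) = ((deriv Real.Gamma x : ℝ) : ℂ) := by
  have hner : ∀ m : ℕ, x ≠ -(m:ℝ) := fun m =>
    ne_of_gt (lt_of_le_of_lt (by simp [neg_nonpos]) hx)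
  have hnec : ∀ m : ℕ, (x:ℂ) ≠ -(m:ℕ) := by
    intro m h
    exact hner m (by exact_mod_cast h)
  have h1 : HasDerivAt (fun y : ℝ => Complex.Gamma (y:ℂ)) (deriv Complex.Gamma (x:ℂ)) x :=
    (Complex.differentiableAt_Gamma _ hnec).hasDerivAt.comp_ofReal
  have h2 : HasDerivAt (fun y : ℝ => ((Real.Gamma y : ℝ) : ℂ)) ((deriv Real.Gamma x : ℝ) : ℂ) x :=
    (Real.differentiableAt_Gamma hner).hasDerivAt.ofReal_comp
  have hfe : (fun y : ℝ => Complex.Gamma (y:ℂ)) = fun y : ℝ => ((Real.Gamma y : ℝ) : ℂ) :=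
    funext fun y => Complex.Gamma_ofReal y
  rw [hfe] at h1
  exact h1.unique h2

lemma hasDerivAt_gammaHalf {z : ℂ} (hz : 0 < z.re) :
    HasDerivAt (fun w : ℂ => Complex.Gamma (w/2)) (deriv Complex.Gamma (z/2) / 2) z := by
  have hner : ∀ m : ℕ, z/2 ≠ -(m:ℕ) := by
    intro m h
    have := congrArg Complex.re h
    rw [Complex.div_re] at this
    simp [Complex.normSq] at this
    have hm : (0:ℝ) ≤ (m:ℝ) := Nat.cast_nonneg m
    nlinarith [this]
  have hG : HasDerivAt Complex.Gamma (deriv Complex.Gamma (z/2)) (z/2) :=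
    (Complex.differentiableAt_Gamma _ hner).hasDerivAt
  have hid : HasDerivAt (fun w : ℂ => w/2) (1/2 : ℂ) z := by
    simpa using (hasDerivAt_id z).div_const 2
  have := hG.comp z hid
  rw [show deriv Complex.Gamma (z/2) / 2 = deriv Complex.Gamma (z/2) * (1/2) by ring]
  exact this

lemma Phi_real {x : ℝ} (hx : 1 < x) :
    Phi (x:ℂ) = -(Real.log 2 : ℂ) - (Real.eulerMascheroniConstant : ℂ)/2 := by
  have hx0 : 0 < x := by linarith
  have hx2 : 0 < x/2 := by linarith
  have hrepos : 0 < ((x:ℂ)).re := by simpa using hx0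
  -- Gamma values
  have hGval : Complex.Gamma ((x:ℂ)/2) = ((Real.Gamma (x/2) : ℝ) : ℂ) := by
    rw [show ((x:ℂ)/2) = ((x/2 : ℝ) : ℂ) by push_cast; ring, Complex.Gamma_ofReal]
  have hDval : deriv (fun w : ℂ => Complex.Gamma (w/2)) (x:ℂ)
      = ((deriv Real.Gamma (x/2) / 2 : ℝ) : ℂ) := by
    rw [(hasDerivAt_gammaHalf hrepos).deriv,
      show ((x:ℂ)/2) = ((x/2 : ℝ) : ℂ) by push_cast; ring,
      deriv_complex_gamma_real hx2]
    push_cast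
    ring
  -- hC at real points
  have hCval : hC (x:ℂ) = ((∑' k : ℕ, ((2*(k:ℝ)+1) * (x + 2*k + 2))⁻¹ : ℝ) : ℂ) := by
    rw [hC, Complex.ofReal_tsum]
    apply tsum_congr
    intro k
    push_cast
    ring_nf
  -- the real tsum
  have hsumval : (x+1) * ∑' k : ℕ, ((2*(k:ℝ)+1) * (x + 2*k + 2))⁻¹
      = 1/x + psiR (x/2)/2 + Real.log 2 + Real.eulerMascheroniConstant/2 := by
    rw [← tsum_mul_left, ← (hasSum_T hx0).tsum_eq]
    apply tsum_congr
    intro k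
    have h1 : (0:ℝ) < 2*(k:ℝ)+1 := by positivity
    have h2 : (0:ℝ) < x + 2*(k:ℝ)+2 := by positivity
    rw [show (x + 2*(k:ℝ) + 2) = (x + 2*(k:ℝ)+2) by ring]
    field_simp
    ring
  -- psiR as ratio
  have hpsi : psiR (x/2) = deriv Real.Gamma (x/2) / Real.Gamma (x/2) := by
    have hner : ∀ m : ℕ, x/2 ≠ -(m:ℝ) := fun m =>
      ne_of_gt (lt_of_le_of_lt (by simp [neg_nonpos]) hx2)
    rw [psiR, Function.comp_def,
      deriv.log (Real.differentiableAt_Gamma hner) (Real.Gamma_pos_of_pos hx2).ne']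
  have hGne : Real.Gamma (x/2) ≠ 0 := (Real.Gamma_pos_of_pos hx2).ne'
  rw [Phi, hGval, hDval, hCval]
  rw [show ((x:ℂ)+1) = ((x+1 : ℝ) : ℂ) by push_cast; ring,
    show (1 : ℂ)/(x:ℂ) = ((1/x : ℝ) : ℂ) by push_cast; ring,
    ← Complex.ofReal_mul, hsumval]
  rw [show ((deriv Real.Gamma (x/2) / 2 : ℝ) : ℂ) / ((Real.Gamma (x/2) : ℝ) : ℂ)
      = ((deriv Real.Gamma (x/2) / 2 / Real.Gamma (x/2) : ℝ) : ℂ) by push_cast; ring]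
  rw [← Complex.ofReal_sub]
  rw [show -(Real.log 2 : ℂ) - (Real.eulerMascheroniConstant : ℂ)/2
      = ((-Real.log 2 - Real.eulerMascheroniConstant/2 : ℝ) : ℂ) by push_cast; ring,
    ← Complex.ofReal_add]
  congr 1
  rw [hpsi]
  field_simp
  ring

lemma Phi_const {s : ℂ} (hs : 1 < s.re) :
    Phi s = -(Real.log 2 : ℂ) - (Real.eulerMascheroniConstant : ℂ)/2 := by
  set C := -(Real.log 2 : ℂ) - (Real.eulerMascheroniConstant : ℂ)/2 with hC'
  have hU : IsPreconnected {z : ℂ | 1 < z.re} := (convex_halfSpace_re_gt 1).isPreconnected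
  have h2 : (2:ℂ) ∈ {z : ℂ | 1 < z.re} := by norm_num [Set.mem_setOf_eq]
  have hseq : Filter.Tendsto (fun n : ℕ => ((2 + 1/((n:ℝ)+1) : ℝ) : ℂ)) Filter.atTop
      (nhdsWithin (2:ℂ) {(2:ℂ)}ᶜ) := by
    rw [tendsto_nhdsWithin_iff]
    constructor
    · have : Filter.Tendsto (fun n : ℕ => (2 + 1/((n:ℝ)+1) : ℝ)) Filter.atTop (𝓝 2) := by
        simpa using (tendsto_one_div_add_atTop_nhds_zero_nat).const_add (2:ℝ)
      have hc : Filter.Tendsto (fun n : ℕ => ((2 + 1/((n:ℝ)+1) : ℝ) : ℂ)) Filter.atTop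
          (𝓝 ((2:ℝ):ℂ)) := (Complex.continuous_ofReal.tendsto (2:ℝ)).comp this
      convert hc using 2; norm_num
    · filter_upwards with n
      simp only [Set.mem_compl_iff, Set.mem_singleton_iff]
      intro h
      rw [show (2:ℂ) = ((2:ℝ):ℂ) by norm_num, Complex.ofReal_inj] at h
      have hpos : (0:ℝ) < 1/((n:ℝ)+1) := by positivity
      linarith
  have hfreq : ∃ᶠ z in nhdsWithin (2:ℂ) {(2:ℂ)}ᶜ, Phi z = C := by
    apply hseq.frequently
    apply Filter.Frequently.of_forall
    intro n
    apply Phi_real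
    have : (0:ℝ) < 1/((n:ℝ)+1) := by positivity
    linarith
  exact Phi_analytic.eqOn_of_preconnected_of_frequently_eq analyticOnNhd_const hU h2 hfreq hs

section IntegralPart

variable {s : ℂ}

noncomputable def FF (s : ℂ) (c : ℂ) : ℕ → ℝ → ℂ := fun n u =>
  match n with
  | 0 => -c * (u:ℂ)^(-s-2)
  | (k+1) => (2*(k:ℂ)+1)⁻¹ * (u:ℂ)^(-s-2-(2*(k:ℂ)+1))

lemma FF_int (hs : 1 < s.re) (c : ℂ) (n : ℕ) :
    IntegrableOn (FF s c n) (Set.Ioi (1:ℝ)) := by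
  match n with
  | 0 =>
    apply Integrable.const_mul
    apply integrableOn_Ioi_cpow_of_lt _ one_pos
    simp only [Complex.sub_re, Complex.neg_re, Complex.re_ofNat]
    linarith
  | (k+1) =>
    apply Integrable.const_mul
    apply integrableOn_Ioi_cpow_of_lt _ one_pos
    simp only [Complex.sub_re, Complex.neg_re, Complex.re_ofNat, Complex.add_re,
      Complex.mul_re, Complex.natCast_re, Complex.one_re, Complex.natCast_im]
    have : (0:ℝ) ≤ (k:ℝ) := Nat.cast_nonneg k
    norm_num
    linarith

lemma FF_norm (hs : 1 < s.re) (c : ℂ) (k : ℕ) {u : ℝ} (hu : u ∈ Set.Ioi (1:ℝ)) :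
    ‖FF s c (k+1) u‖ = (2*(k:ℝ)+1)⁻¹ * u^(-s.re-2-(2*(k:ℝ)+1)) := by
  have hu0 : (0:ℝ) < u := lt_trans one_pos hu
  simp only [FF, norm_mul, norm_inv]
  congr 1
  · rw [show (2*(k:ℂ)+1) = ((2*(k:ℝ)+1 : ℝ) : ℂ) by push_cast; ring, Complex.norm_real,
      Real.norm_of_nonneg (by positivity)]
  · rw [Complex.norm_cpow_eq_rpow_re_of_pos hu0]
    congr 1
    simp only [Complex.sub_re, Complex.neg_re, Complex.re_ofNat, Complex.add_re,
      Complex.mul_re, Complex.natCast_re, Complex.one_re, Complex.natCast_im,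
      Complex.im_ofNat]
    norm_num

lemma FF_norm_integral (hs : 1 < s.re) (c : ℂ) (k : ℕ) :
    ∫ u in Set.Ioi (1:ℝ), ‖FF s c (k+1) u‖
      = (2*(k:ℝ)+1)⁻¹ * (s.re+2*(k:ℝ)+2)⁻¹ := by
  rw [MeasureTheory.setIntegral_congr_fun measurableSet_Ioi
    (fun u hu => FF_norm hs c k hu)]
  rw [MeasureTheory.integral_const_mul]
  rw [integral_Ioi_rpow_of_lt (by linarith [Nat.cast_nonneg (α := ℝ) k]) one_pos]
  rw [Real.one_rpow]
  have h2 : -s.re - 2 - (2*(k:ℝ)+1) + 1 = -(s.re + 2*(k:ℝ) + 2) := by ring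
  rw [h2, neg_div_neg_eq, one_div]

lemma FF_summable (hs : 1 < s.re) (c : ℂ) :
    Summable (fun n => ∫ u in Set.Ioi (1:ℝ), ‖FF s c n u‖) := by
  apply (summable_nat_add_iff 1).mp
  have : (fun k : ℕ => ∫ u in Set.Ioi (1:ℝ), ‖FF s c (k+1) u‖)
      = fun k : ℕ => (2*(k:ℝ)+1)⁻¹ * (s.re+2*(k:ℝ)+2)⁻¹ := by
    funext k
    exact FF_norm_integral hs c k
  rw [this]
  refine Summable.of_nonneg_of_le (fun k => by positivity) (fun k => ?_) summable_shift_sq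
  rw [← mul_inv]
  apply inv_anti₀ (by positivity)
  nlinarith [sq_nonneg ((k:ℝ)+1), Nat.cast_nonneg (α := ℝ) k]

lemma FF_pointwise (hs : 1 < s.re) (c : ℂ) {u : ℝ} (hu : u ∈ Set.Ioi (1:ℝ)) :
    ∑' n, FF s c n u = ((arctanh (1/u) : ℝ) - c) * (u:ℂ)^(-s-2) := by
  have hu1 : (1:ℝ) < u := hu
  have hu0 : (0:ℝ) < u := lt_trans one_pos hu1
  have hu0c : (u:ℂ) ≠ 0 := Complex.ofReal_ne_zero.mpr hu0.ne'
  have hinv : |1/u| < 1 := by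
    rw [abs_of_pos (by positivity)]
    rw [div_lt_one hu0]
    exact hu1
  have hlog := Real.hasSum_log_sub_log_of_abs_lt_one hinv
  have harct : HasSum (fun k : ℕ => (2*(k:ℝ)+1)⁻¹ * (1/u)^(2*k+1)) (arctanh (1/u)) := by
    have h1 := hlog.div_const 2
    have heq : (fun k : ℕ => 2 * (1/(2*(k:ℝ)+1)) * (1/u)^(2*k+1) / 2)
        = fun k : ℕ => (2*(k:ℝ)+1)⁻¹ * (1/u)^(2*k+1) := by
      funext k
      field_simp
    rw [heq] at h1
    have hval : (Real.log (1 + 1/u) - Real.log (1 - 1/u)) / 2 = arctanh (1/u) := by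
      rw [arctanh, Real.log_div (by positivity) (by
        have : 1/u < 1 := by rwa [div_lt_one hu0]
        linarith)]
    rwa [hval] at h1
  have hCsum : HasSum (fun k : ℕ => ((((2*(k:ℝ)+1)⁻¹ * (1/u)^(2*k+1) : ℝ)) : ℂ))
      ((arctanh (1/u) : ℝ) : ℂ) := Complex.ofRealCLM.hasSum harct
  have hmul := hCsum.mul_right ((u:ℂ)^(-s-2))
  have hterm : (fun k : ℕ => ((((2*(k:ℝ)+1)⁻¹ * (1/u)^(2*k+1) : ℝ)) : ℂ) * (u:ℂ)^(-s-2))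
      = fun k : ℕ => FF s c (k+1) u := by
    funext k
    simp only [FF]
    rw [show (-s-2-(2*(k:ℂ)+1)) = (-s-2) + (-((2*k+1 : ℕ):ℂ)) by push_cast; ring,
      Complex.cpow_add _ _ hu0c, Complex.cpow_neg, Complex.cpow_natCast]
    push_cast
    rw [div_pow, one_pow, one_div]
    ring
  rw [hterm] at hmul
  have hfull := (hasSum_nat_add_iff (f := fun n => FF s c n u) 1).mp hmul
  rw [hfull.tsum_eq]
  simp only [FF, Finset.range_one, Finset.sum_singleton]
  ring

lemma integral_eval (hs : 1 < s.re) (c : ℂ) :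
    ∫ u in Set.Ioi (1:ℝ), ((arctanh (1/u) : ℝ) - c) * (u:ℂ)^(-s-2)
      = hC s - c * (s+1)⁻¹ := by
  have hs1ne : s + 1 ≠ 0 := by
    intro h
    have := congrArg Complex.re h
    simp [Complex.add_re] at this
    linarith
  have hmain := MeasureTheory.hasSum_integral_of_summable_integral_norm
    (μ := MeasureTheory.volume.restrict (Set.Ioi (1:ℝ)))
    (F := FF s c) (fun n => FF_int hs c n) (FF_summable hs c)
  have hcongr : ∫ u in Set.Ioi (1:ℝ), (∑' n, FF s c n u)
      = ∫ u in Set.Ioi (1:ℝ), ((arctanh (1/u) : ℝ) - c) * (u:ℂ)^(-s-2) :=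
    MeasureTheory.setIntegral_congr_fun measurableSet_Ioi
      (fun u hu => FF_pointwise hs c hu)
  rw [hcongr] at hmain
  -- now compute the sum of integrals
  rw [← hmain.tsum_eq, Summable.tsum_eq_zero_add hmain.summable]
  have hI0 : ∫ u in Set.Ioi (1:ℝ), FF s c 0 u = -c * (s+1)⁻¹ := by
    simp only [FF]
    rw [MeasureTheory.integral_const_mul,
      integral_Ioi_cpow_of_lt (by simp [Complex.sub_re]; linarith) one_pos]
    rw [Complex.ofReal_one, Complex.one_cpow]
    have : -s - 2 + 1 ≠ 0 := by
      intro h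
      apply hs1ne
      have : s + 1 = -(-s - 2 + 1) := by ring
      rw [this, h]; ring
    field_simp
    ring
  have hIk : ∀ k : ℕ, ∫ u in Set.Ioi (1:ℝ), FF s c (k+1) u
      = ((2*(k:ℂ)+1) * (s + 2*k + 2))⁻¹ := by
    intro k
    simp only [FF]
    have hne : -s - 2 - (2*(k:ℂ)+1) + 1 ≠ 0 := by
      intro h
      apply denom_ne hs k
      have : s + 2*(k:ℂ) + 2 = -(-s - 2 - (2*(k:ℂ)+1) + 1) := by ring
      rw [this, h]; ring
    rw [MeasureTheory.integral_const_mul,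
      integral_Ioi_cpow_of_lt (by
        simp only [Complex.sub_re, Complex.neg_re, Complex.re_ofNat, Complex.add_re,
          Complex.mul_re, Complex.natCast_re, Complex.one_re, Complex.natCast_im,
          Complex.im_ofNat]
        have : (0:ℝ) ≤ (k:ℝ) := Nat.cast_nonneg k
        norm_num
        linarith) one_pos]
    have h2 : -s - 2 - (2*(k:ℂ)+1) + 1 = -(s + 2*(k:ℂ) + 2) := by ring
    rw [Complex.ofReal_one, Complex.one_cpow, h2, neg_div_neg_eq, one_div, mul_inv]
  rw [hI0]
  have : ∑' k : ℕ, ∫ u in Set.Ioi (1:ℝ), FF s c (k+1) u = hC s := by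
    rw [hC]
    apply tsum_congr
    intro k
    exact hIk k
  rw [this]
  ring

end IntegralPart


/-- For every complex `s` with `Re(s) > 1`,
`1/s − (s+1)·∫₁^∞ (arctanh(1/u) − ζ′(−1)/ζ(−1))·u^{−s−2} du
  = −(d/ds)Γ(s/2)/Γ(s/2) + ζ′(−1)/ζ(−1) − log 2 − γ/2`. -/
theorem statement8 (s : ℂ) (hs : 1 < s.re) :
    1 / s - (s + 1) *
      ∫ u in Set.Ioi (1 : ℝ),
        ((arctanh (1 / u) : ℂ) - deriv riemannZeta (-1) / riemannZeta (-1)) *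
          (u : ℂ) ^ (-s - 2) =
    -(deriv (fun z : ℂ => Complex.Gamma (z / 2)) s) / Complex.Gamma (s / 2) +
      deriv riemannZeta (-1) / riemannZeta (-1) - (Real.log 2 : ℂ) -
      (Real.eulerMascheroniConstant : ℂ) / 2 := by
  set c : ℂ := deriv riemannZeta (-1) / riemannZeta (-1) with hc
  have hs1ne : s + 1 ≠ 0 := by
    intro h
    have := congrArg Complex.re h
    simp [Complex.add_re] at this
    linarith
  rw [integral_eval hs c]
  have hPhi := Phi_const hs
  rw [Phi] at hPhi
  have hinv : (s+1) * (s+1)⁻¹ = 1 := mul_inv_cancel₀ hs1ne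
  have hng : -(deriv (fun z : ℂ => Complex.Gamma (z / 2)) s) / Complex.Gamma (s / 2)
      = -(deriv (fun z : ℂ => Complex.Gamma (z / 2)) s / Complex.Gamma (s / 2)) := by
    ring
  rw [hng]
  linear_combination hPhi + c * hinv
end

section
/- Let N(x) = Σ_{k=0}^d a_k·x^k be a polynomial with integer coefficients a_k, and let s be a real number with s > d. Then the limit defining the zeta function over F₁ of the counting function N exists and is given by lim_{q→1⁺} (q−1)^{N(1)} · exp(Σ_{r=1}^∞ N(q^r)·q^{−rs}/r) = ∏_{k=0}^d (s−k)^{−a_k}, where the limit is over real q > 1 tending to 1 and N(1) = Σ_{k=0}^d a_k. -/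
open Filter Set

private lemma zpow_finset_sum' {b : ℝ} (hb : b ≠ 0) (t : Finset ℕ) (f : ℕ → ℤ) :
    b ^ (∑ k ∈ t, f k) = ∏ k ∈ t, b ^ (f k) := by
  induction t using Finset.cons_induction with
  | empty => simp
  | cons k t hk ih => rw [Finset.sum_cons, Finset.prod_cons, zpow_add₀ hb, ih]

/-- For a polynomial counting function `N(x) = Σ_{k≤d} a_k x^k` with
integer coefficients and a real `s > d`, the series `Σ_{r≥1} N(q^r) q^{-rs}/r` converges
for each real `q > 1` and the limit defining the zeta function over `F₁`,
`ζ_N(s) = lim_{q→1⁺} (q−1)^{N(1)} exp(Σ_{r≥1} N(q^r) q^{−rs}/r)`, exists and equals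
`∏_{k≤d} (s−k)^{−a_k}`. -/
theorem statement15 (d : ℕ) (a : ℕ → ℤ) (N : ℝ → ℝ)
    (hN : ∀ x : ℝ, N x = ∑ k ∈ Finset.range (d + 1), (a k : ℝ) * x ^ k)
    (s : ℝ) (hs : (d : ℝ) < s) :
    (∀ q : ℝ, 1 < q →
      Summable (fun r : ℕ => N (q ^ (r + 1)) * q ^ (-((r : ℝ) + 1) * s) / ((r : ℝ) + 1))) ∧
    Filter.Tendsto
      (fun q : ℝ => (q - 1) ^ (∑ k ∈ Finset.range (d + 1), a k) *
        Real.exp (∑' r : ℕ, N (q ^ (r + 1)) * q ^ (-((r : ℝ) + 1) * s) / ((r : ℝ) + 1)))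
      (nhdsWithin 1 (Set.Ioi 1))
      (nhds (∏ k ∈ Finset.range (d + 1), (s - (k : ℝ)) ^ (-(a k)))) := by
  have hts : ∀ k ∈ Finset.range (d + 1), (k : ℝ) - s < 0 := by
    intro k hk
    have : (k : ℝ) ≤ d := by
      exact_mod_cast Nat.lt_succ_iff.mp (Finset.mem_range.mp hk)
    linarith
  have key : ∀ q : ℝ, 1 < q →
      HasSum (fun r : ℕ => N (q ^ (r + 1)) * q ^ (-((r : ℝ) + 1) * s) / ((r : ℝ) + 1))
        (∑ k ∈ Finset.range (d + 1), (a k : ℝ) * (-Real.log (1 - q ^ ((k : ℝ) - s)))) := by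
    intro q hq
    have hq0 : (0 : ℝ) < q := lt_trans one_pos hq
    have h1 : ∀ k ∈ Finset.range (d + 1),
        HasSum (fun r : ℕ => (a k : ℝ) * ((q ^ ((k : ℝ) - s)) ^ (r + 1) / ((r : ℝ) + 1)))
          ((a k : ℝ) * (-Real.log (1 - q ^ ((k : ℝ) - s)))) := by
      intro k hk
      have hx : 0 < q ^ ((k : ℝ) - s) := Real.rpow_pos_of_pos hq0 _
      have hx1 : q ^ ((k : ℝ) - s) < 1 :=
        Real.rpow_lt_one_of_one_lt_of_neg hq (hts k hk)
      have habs : |q ^ ((k : ℝ) - s)| < 1 := by rw [abs_of_pos hx]; exact hx1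
      have h := (Real.hasSum_pow_div_log_of_abs_lt_one habs).mul_left (a k : ℝ)
      simpa [Nat.cast_add, Nat.cast_one] using h
    have hsum := hasSum_sum h1
    have heq : (fun r : ℕ => N (q ^ (r + 1)) * q ^ (-((r : ℝ) + 1) * s) / ((r : ℝ) + 1)) =
        fun r : ℕ => ∑ k ∈ Finset.range (d + 1),
          (a k : ℝ) * ((q ^ ((k : ℝ) - s)) ^ (r + 1) / ((r : ℝ) + 1)) := by
      funext r
      rw [hN, Finset.sum_mul, Finset.sum_div]
      refine Finset.sum_congr rfl fun k hk => ?_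
      have e1 : ((q : ℝ) ^ (r + 1)) ^ k = q ^ (((((r + 1) * k : ℕ)) : ℝ)) := by
        rw [← pow_mul, Real.rpow_natCast]
      have e2 : (q ^ ((k : ℝ) - s)) ^ (r + 1) = q ^ (((k : ℝ) - s) * ((r : ℝ) + 1)) := by
        rw [← Real.rpow_natCast (q ^ ((k : ℝ) - s)) (r + 1), ← Real.rpow_mul hq0.le]
        push_cast; ring_nf
      rw [mul_assoc, e1, e2, ← Real.rpow_add hq0]
      have e3 : ((((r + 1) * k : ℕ)) : ℝ) + (-((r : ℝ) + 1) * s) =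
          ((k : ℝ) - s) * ((r : ℝ) + 1) := by push_cast; ring
      rw [e3, mul_div_assoc]
    rw [heq]
    exact hsum
  refine ⟨fun q hq => (key q hq).summable, ?_⟩
  -- eventual equality with the product form
  have heq2 : ∀ q ∈ Set.Ioi (1 : ℝ),
      (q - 1) ^ (∑ k ∈ Finset.range (d + 1), a k) *
        Real.exp (∑' r : ℕ, N (q ^ (r + 1)) * q ^ (-((r : ℝ) + 1) * s) / ((r : ℝ) + 1)) =
      ∏ k ∈ Finset.range (d + 1), ((q - 1) * (1 - q ^ ((k : ℝ) - s))⁻¹) ^ (a k) := by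
    intro q hq
    have hq : (1 : ℝ) < q := hq
    have hq0 : (0 : ℝ) < q := lt_trans one_pos hq
    have hq1 : q - 1 ≠ 0 := sub_ne_zero.mpr (ne_of_gt hq)
    rw [(key q hq).tsum_eq, Real.exp_sum, zpow_finset_sum' hq1, ← Finset.prod_mul_distrib]
    refine Finset.prod_congr rfl fun k hk => ?_
    have hx1 : q ^ ((k : ℝ) - s) < 1 :=
      Real.rpow_lt_one_of_one_lt_of_neg hq (hts k hk)
    have hy : (0 : ℝ) < 1 - q ^ ((k : ℝ) - s) := by linarith
    have e : Real.exp ((a k : ℝ) * -Real.log (1 - q ^ ((k : ℝ) - s))) =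
        ((1 - q ^ ((k : ℝ) - s))⁻¹) ^ (a k) := by
      have e' := Real.rpow_def_of_pos (inv_pos.mpr hy) ((a k : ℤ) : ℝ)
      rw [← Real.rpow_intCast ((1 - q ^ ((k : ℝ) - s))⁻¹) (a k), e', Real.log_inv]
      congr 1
      ring
    rw [e, mul_zpow]
  have hprod : Filter.Tendsto
        (fun q : ℝ => ∏ k ∈ Finset.range (d + 1), ((q - 1) * (1 - q ^ ((k : ℝ) - s))⁻¹) ^ (a k))
        (nhdsWithin 1 (Set.Ioi 1))
        (nhds (∏ k ∈ Finset.range (d + 1), ((s - (k : ℝ))⁻¹) ^ (a k))) := by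
      refine tendsto_finset_prod _ fun k hk => ?_
      set t : ℝ := (k : ℝ) - s with ht
      have htneg : t < 0 := hts k hk
      have hbase : Tendsto (fun q : ℝ => (q - 1) * (1 - q ^ t)⁻¹) (nhdsWithin 1 (Set.Ioi 1))
          (nhds ((s - (k : ℝ))⁻¹)) := by
        have hder : HasDerivAt (fun q : ℝ => q ^ t) (t * (1 : ℝ) ^ (t - 1)) 1 :=
          Real.hasDerivAt_rpow_const (Or.inl one_ne_zero)
        have h1 := hasDerivAt_iff_tendsto_slope.mp hder
        have h2 : Tendsto (slope (fun q : ℝ => q ^ t) 1) (nhdsWithin 1 (Set.Ioi 1)) (nhds t) := by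
          have := h1.mono_left (nhdsWithin_mono 1 (show Set.Ioi (1:ℝ) ⊆ {1}ᶜ from fun x hx => ne_of_gt hx))
          simpa [Real.one_rpow] using this
        have hne : -t ≠ 0 := ne_of_gt (by linarith)
        have h3 := (h2.neg).inv₀ hne
        have heq3 : (fun q : ℝ => (-(slope (fun q : ℝ => q ^ t) 1 q))⁻¹) =
            fun q : ℝ => (q - 1) * (1 - q ^ t)⁻¹ := by
          funext q
          rw [slope_def_field, Real.one_rpow, ← neg_div, neg_sub, inv_div, div_eq_mul_inv]
        rw [heq3] at h3
        have : (-t)⁻¹ = (s - (k : ℝ))⁻¹ := by rw [ht]; ring_nf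
        rwa [this] at h3
      have hpos : (0 : ℝ) < s - (k : ℝ) := by have := hts k hk; linarith
      exact (((continuousAt_zpow₀ ((s - (k : ℝ))⁻¹) (a k)
        (Or.inl (inv_ne_zero (ne_of_gt hpos)))).tendsto).comp hbase)
  have hval : (∏ k ∈ Finset.range (d + 1), ((s - (k : ℝ))⁻¹) ^ (a k)) =
      ∏ k ∈ Finset.range (d + 1), (s - (k : ℝ)) ^ (-(a k)) := by
    refine Finset.prod_congr rfl fun k hk => ?_
    rw [zpow_neg, ← inv_zpow]
  rw [hval] at hprod
  exact Filter.Tendsto.congr'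
    (eventually_nhdsWithin_of_forall fun q hq => (heq2 q hq).symm) hprod
end
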